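/- arXiv:1302.0888 — 3 statements merged into one kernel-verified Lean document; each statement's English description precedes it below -/
import Mathlib

section
/- Let {G_k} be d×d matrices all of whose entries lie in [c, 1/c] for some c ∈ (0,1]. Then there exists a probability vector v ∈ ℝ^d such that for every nonzero nonnegative row vector π and every k ≥ 1, ‖ (π G_k G_{k-1} ⋯ G_1)/(π G_k G_{k-1} ⋯ G_1 𝟏) − v ‖₁ ≤ 2(1−c⁴)^{k−1}/c⁴. -/
open Matrix Finset Filter
set_option linter.unusedSectionVars false
set_option linter.unusedVariables false


namespace Stmt3Aux

variable {d : ℕ} [NeZero d]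

/-- ℓ¹ distance on `Fin d → ℝ`. -/
def l1 (x y : Fin d → ℝ) : ℝ := ∑ j, |x j - y j|

lemma l1_nonneg (x y : Fin d → ℝ) : 0 ≤ l1 x y :=
  Finset.sum_nonneg fun _ _ => abs_nonneg _

lemma l1_comm (x y : Fin d → ℝ) : l1 x y = l1 y x := by
  unfold l1; congr 1; ext j; rw [abs_sub_comm]

lemma l1_triangle (x y z : Fin d → ℝ) : l1 x z ≤ l1 x y + l1 y z := by
  unfold l1
  rw [← Finset.sum_add_distrib]
  exact Finset.sum_le_sum fun j _ => abs_sub_le _ _ _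

lemma l1_convex_le {ι : Type*} [Fintype ι] (w : ι → ℝ) (hw : ∀ i, 0 ≤ w i)
    (hw1 : ∑ i, w i = 1) (x : ι → Fin d → ℝ) (y : Fin d → ℝ) (B : ℝ)
    (h : ∀ i, l1 (x i) y ≤ B) :
    l1 (fun j => ∑ i, w i * x i j) y ≤ B := by
  unfold l1 at *
  have key : ∀ j : Fin d, (∑ i, w i * x i j) - y j = ∑ i, w i * (x i j - y j) := by
    intro j
    rw [Finset.sum_congr rfl (fun i _ => mul_sub (w i) (x i j) (y j)),
      Finset.sum_sub_distrib, ← Finset.sum_mul, hw1, one_mul]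
  calc ∑ j, |(∑ i, w i * x i j) - y j|
      = ∑ j, |∑ i, w i * (x i j - y j)| := by
        exact Finset.sum_congr rfl fun j _ => by rw [key j]
    _ ≤ ∑ j, ∑ i, |w i * (x i j - y j)| :=
        Finset.sum_le_sum fun j _ => Finset.abs_sum_le_sum_abs _ _
    _ = ∑ i, w i * ∑ j, |x i j - y j| := by
        rw [Finset.sum_comm]
        exact Finset.sum_congr rfl fun i _ => by
          rw [Finset.mul_sum]
          exact Finset.sum_congr rfl fun j _ => by
            rw [abs_mul, abs_of_nonneg (hw i)]
    _ ≤ ∑ i, w i * B :=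
        Finset.sum_le_sum fun i _ => mul_le_mul_of_nonneg_left (h i) (hw i)
    _ = B := by rw [← Finset.sum_mul, hw1, one_mul]

lemma l1_convex_convex {ι : Type*} [Fintype ι] (w u : ι → ℝ)
    (hw : ∀ i, 0 ≤ w i) (hw1 : ∑ i, w i = 1)
    (hu : ∀ i, 0 ≤ u i) (hu1 : ∑ i, u i = 1)
    (x : ι → Fin d → ℝ) (B : ℝ)
    (h : ∀ i i', l1 (x i) (x i') ≤ B) :
    l1 (fun j => ∑ i, w i * x i j) (fun j => ∑ i, u i * x i j) ≤ B := by
  apply l1_convex_le w hw hw1 x _ B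
  intro i
  rw [l1_comm]
  exact l1_convex_le u hu hu1 x (x i) B fun i' => h i' i

/-- Dobrushin-type contraction. -/
lemma dobrushin {ι : Type*} [Fintype ι] (p q : ι → ℝ)
    (hp : ∀ i, 0 ≤ p i) (hp1 : ∑ i, p i = 1)
    (hq : ∀ i, 0 ≤ q i) (hq1 : ∑ i, q i = 1)
    (x : ι → Fin d → ℝ) (B : ℝ) (hB : 0 ≤ B)
    (hx : ∀ i i', l1 (x i) (x i') ≤ B) :
    l1 (fun j => ∑ i, p i * x i j) (fun j => ∑ i, q i * x i j)
      ≤ (1 - ∑ i, min (p i) (q i)) * B := by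
  set m : ι → ℝ := fun i => min (p i) (q i) with hm
  set s : ℝ := 1 - ∑ i, m i with hs
  have hpm : ∀ i, 0 ≤ p i - m i := fun i => sub_nonneg.2 (min_le_left _ _)
  have hqm : ∀ i, 0 ≤ q i - m i := fun i => sub_nonneg.2 (min_le_right _ _)
  have hps : ∑ i, (p i - m i) = s := by rw [Finset.sum_sub_distrib, hp1]
  have hqs : ∑ i, (q i - m i) = s := by rw [Finset.sum_sub_distrib, hq1]
  have hs0 : 0 ≤ s := hps ▸ Finset.sum_nonneg fun i _ => hpm i
  rcases eq_or_lt_of_le hs0 with hse | hsp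
  · -- s = 0 : p = q
    have hpe : ∀ i, p i = m i := by
      intro i
      have := (Finset.sum_eq_zero_iff_of_nonneg (fun i _ => hpm i)).1 (hps.trans hse.symm) i
        (Finset.mem_univ i)
      linarith
    have hqe : ∀ i, q i = m i := by
      intro i
      have := (Finset.sum_eq_zero_iff_of_nonneg (fun i _ => hqm i)).1 (hqs.trans hse.symm) i
        (Finset.mem_univ i)
      linarith
    have : (fun j => ∑ i, p i * x i j) = (fun j => ∑ i, q i * x i j) := by
      funext j
      exact Finset.sum_congr rfl fun i _ => by rw [hpe i, hqe i]
    rw [this]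
    have : l1 (fun j => ∑ i, q i * x i j) (fun j => ∑ i, q i * x i j) = 0 := by
      unfold l1; simp
    rw [this]
    positivity
  · -- s > 0
    set μ : ι → ℝ := fun i => (p i - m i) / s with hμ
    set ν : ι → ℝ := fun i => (q i - m i) / s with hν
    have hμ0 : ∀ i, 0 ≤ μ i := fun i => div_nonneg (hpm i) hs0
    have hν0 : ∀ i, 0 ≤ ν i := fun i => div_nonneg (hqm i) hs0
    have hμ1 : ∑ i, μ i = 1 := by
      rw [← Finset.sum_div, hps, div_self hsp.ne']
    have hν1 : ∑ i, ν i = 1 := by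
      rw [← Finset.sum_div, hqs, div_self hsp.ne']
    have key : ∀ j, (∑ i, p i * x i j) - (∑ i, q i * x i j)
        = s * ((∑ i, μ i * x i j) - ∑ i, ν i * x i j) := by
      intro j
      rw [mul_sub, Finset.mul_sum, Finset.mul_sum]
      rw [← Finset.sum_sub_distrib, ← Finset.sum_sub_distrib]
      refine Finset.sum_congr rfl fun i _ => ?_
      field_simp [hμ, hν]
      have hμs : μ i * s = p i - m i := div_mul_cancel₀ _ hsp.ne'
      have hνs : ν i * s = q i - m i := div_mul_cancel₀ _ hsp.ne'
      linear_combination (-(x i j)) * hμs + (x i j) * hνs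
    have : l1 (fun j => ∑ i, p i * x i j) (fun j => ∑ i, q i * x i j)
        = s * l1 (fun j => ∑ i, μ i * x i j) (fun j => ∑ i, ν i * x i j) := by
      unfold l1
      rw [Finset.mul_sum]
      refine Finset.sum_congr rfl fun j _ => ?_
      rw [key j, abs_mul, abs_of_nonneg hs0]
    rw [this]
    exact mul_le_mul_of_nonneg_left (l1_convex_convex μ ν hμ0 hμ1 hν0 hν1 x B hx) hs0

lemma geom_sum_le_div {x : ℝ} (hx0 : 0 ≤ x) (hx1 : x < 1) (n : ℕ) :
    ∑ t ∈ Finset.range n, x ^ t ≤ 1 / (1 - x) := by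
  have h1 : 0 < 1 - x := by linarith
  rw [le_div_iff₀ h1, geom_sum_eq hx1.ne n]
  have h2 : (0:ℝ) ≤ x ^ n := pow_nonneg hx0 n
  have hne : x - 1 ≠ 0 := by linarith
  have h3 : (x ^ n - 1) / (x - 1) * (1 - x) = 1 - x ^ n := by
    rw [show (1-x) = -(x-1) by ring, mul_neg, div_mul_cancel₀ _ hne]
    ring
  rw [h3]
  linarith


/-- The left product `G k * G (k-1) * ⋯ * G 1`. -/
def Mprod {d : ℕ} (G : ℕ → Matrix (Fin d) (Fin d) ℝ) (k : ℕ) :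
    Matrix (Fin d) (Fin d) ℝ :=
  ((List.range k).map (fun m => G (k - m))).prod

lemma Mprod_zero {d : ℕ} (G : ℕ → Matrix (Fin d) (Fin d) ℝ) : Mprod G 0 = 1 := rfl

lemma Mprod_succ {d : ℕ} (G : ℕ → Matrix (Fin d) (Fin d) ℝ) (k : ℕ) :
    Mprod G (k + 1) = G (k + 1) * Mprod G k := by
  unfold Mprod
  rw [List.range_succ_eq_map, List.map_cons, List.prod_cons, List.map_map]
  congr 2
  apply List.map_congr_left
  intro m _
  simp [Function.comp, Nat.succ_sub_succ]


section
variable {d : ℕ} [NeZero d] {c : ℝ} {G : ℕ → Matrix (Fin d) (Fin d) ℝ}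

variable (hc0 : 0 < c) (hc1 : c ≤ 1) (hG : ∀ k i j, G k i j ∈ Set.Icc c (1/c))

include hc0 hG

/-- Entries nonneg and column sums positive. -/
lemma Mprod_base (k : ℕ) :
    (∀ i j, 0 ≤ Mprod G k i j) ∧ (∀ j, 0 < ∑ i, Mprod G k i j) := by
  induction k with
  | zero =>
    rw [Mprod_zero]
    constructor
    · intro i j
      rw [Matrix.one_apply]
      split <;> norm_num
    · intro j
      simp [Matrix.one_apply]
  | succ n ih =>
    have hGc : ∀ k i j, c ≤ G k i j := fun k i j => (hG k i j).1
    have hent : ∀ i j, c * (∑ t, Mprod G n t j) ≤ Mprod G (n+1) i j := by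
      intro i j
      rw [Mprod_succ, Matrix.mul_apply, Finset.mul_sum]
      exact Finset.sum_le_sum fun t _ =>
        mul_le_mul_of_nonneg_right (hGc _ _ _) (ih.1 t j)
    have hpos : ∀ i j, 0 < Mprod G (n+1) i j := fun i j =>
      lt_of_lt_of_le (mul_pos hc0 (ih.2 j)) (hent i j)
    exact ⟨fun i j => (hpos i j).le, fun j => Finset.sum_pos (fun i _ => hpos i j) univ_nonempty⟩

lemma Mprod_pos (n : ℕ) (i j : Fin d) : 0 < Mprod G (n+1) i j := by
  have h := Mprod_base hc0 hG (n+1)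
  have hent : c * (∑ t, Mprod G n t j) ≤ Mprod G (n+1) i j := by
    rw [Mprod_succ, Matrix.mul_apply, Finset.mul_sum]
    exact Finset.sum_le_sum fun t _ =>
      mul_le_mul_of_nonneg_right (hG _ _ _).1 ((Mprod_base hc0 hG n).1 t j)
  exact lt_of_lt_of_le (mul_pos hc0 ((Mprod_base hc0 hG n).2 j)) hent

lemma Mprod_low (n : ℕ) (i j : Fin d) :
    c * (∑ t, Mprod G n t j) ≤ Mprod G (n+1) i j := by
  rw [Mprod_succ, Matrix.mul_apply, Finset.mul_sum]
  exact Finset.sum_le_sum fun t _ =>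
    mul_le_mul_of_nonneg_right (hG _ _ _).1 ((Mprod_base hc0 hG n).1 t j)

lemma Mprod_up (n : ℕ) (i j : Fin d) :
    c * Mprod G (n+1) i j ≤ ∑ t, Mprod G n t j := by
  have h1 : Mprod G (n+1) i j ≤ (1/c) * ∑ t, Mprod G n t j := by
    rw [Mprod_succ, Matrix.mul_apply, Finset.mul_sum]
    exact Finset.sum_le_sum fun t _ =>
      mul_le_mul_of_nonneg_right (hG _ _ _).2 ((Mprod_base hc0 hG n).1 t j)
  have := mul_le_mul_of_nonneg_left h1 hc0.le
  calc c * Mprod G (n+1) i j ≤ c * ((1/c) * ∑ t, Mprod G n t j) := this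
    _ = ∑ t, Mprod G n t j := by field_simp

noncomputable def Rsum (G : ℕ → Matrix (Fin d) (Fin d) ℝ) (k : ℕ) (i : Fin d) : ℝ :=
  ∑ j, Mprod G k i j

noncomputable def rrow (G : ℕ → Matrix (Fin d) (Fin d) ℝ) (k : ℕ) (i j : Fin d) : ℝ :=
  Mprod G k i j / Rsum G k i

noncomputable def Tmat (G : ℕ → Matrix (Fin d) (Fin d) ℝ) (n : ℕ) (i l : Fin d) : ℝ :=
  G (n+2) i l * Rsum G (n+1) l / Rsum G (n+2) i

lemma Mprod_ratio (n : ℕ) (i i' j : Fin d) :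
    c^2 * Mprod G (n+1) i' j ≤ Mprod G (n+1) i j := by
  have h1 := Mprod_low hc0 hG n i j
  have h2 := Mprod_up hc0 hG n i' j
  nlinarith [mul_le_mul_of_nonneg_left h2 hc0.le]

lemma Rsum_pos (n : ℕ) (i : Fin d) : 0 < Rsum G (n+1) i :=
  Finset.sum_pos (fun j _ => Mprod_pos hc0 hG n i j) univ_nonempty

lemma Rsum_ratio (n : ℕ) (i i' : Fin d) :
    c^2 * Rsum G (n+1) i' ≤ Rsum G (n+1) i := by
  unfold Rsum
  rw [Finset.mul_sum]
  exact Finset.sum_le_sum fun j _ => Mprod_ratio hc0 hG n i i' j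

lemma Rsum_low (n : ℕ) (i : Fin d) :
    c^2 * (∑ i', Rsum G (n+1) i') ≤ (d : ℝ) * Rsum G (n+1) i := by
  rw [Finset.mul_sum]
  calc ∑ i', c^2 * Rsum G (n+1) i' ≤ ∑ _i' : Fin d, Rsum G (n+1) i :=
        Finset.sum_le_sum fun i' _ => Rsum_ratio hc0 hG n i i'
    _ = (d : ℝ) * Rsum G (n+1) i := by
        rw [Finset.sum_const, Finset.card_univ, Fintype.card_fin, nsmul_eq_mul]

lemma Rsum_rec (n : ℕ) (i : Fin d) :
    Rsum G (n+2) i = ∑ l, G (n+2) i l * Rsum G (n+1) l := by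
  unfold Rsum
  rw [show (n+2) = (n+1)+1 from rfl]
  calc ∑ j, Mprod G ((n+1)+1) i j
      = ∑ j, ∑ l, G (n+2) i l * Mprod G (n+1) l j := by
        refine Finset.sum_congr rfl fun j _ => ?_
        rw [Mprod_succ, Matrix.mul_apply]
    _ = ∑ l, G (n+2) i l * ∑ j, Mprod G (n+1) l j := by
        rw [Finset.sum_comm]
        exact Finset.sum_congr rfl fun l _ => by rw [Finset.mul_sum]

lemma Rsum_up (n : ℕ) (i : Fin d) :
    c * Rsum G (n+2) i ≤ ∑ l, Rsum G (n+1) l := by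
  have h1 : Rsum G (n+2) i ≤ (1/c) * ∑ l, Rsum G (n+1) l := by
    rw [Rsum_rec hc0 hG, Finset.mul_sum]
    exact Finset.sum_le_sum fun l _ =>
      mul_le_mul_of_nonneg_right (hG _ _ _).2 (Rsum_pos hc0 hG n l).le
  calc c * Rsum G (n+2) i ≤ c * ((1/c) * ∑ l, Rsum G (n+1) l) :=
        mul_le_mul_of_nonneg_left h1 hc0.le
    _ = ∑ l, Rsum G (n+1) l := by field_simp

lemma rrow_nonneg (n : ℕ) (i j : Fin d) : 0 ≤ rrow G (n+1) i j :=
  div_nonneg (Mprod_pos hc0 hG n i j).le (Rsum_pos hc0 hG n i).le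

lemma rrow_sum_one (n : ℕ) (i : Fin d) : ∑ j, rrow G (n+1) i j = 1 := by
  unfold rrow
  rw [← Finset.sum_div]
  exact div_self (Rsum_pos hc0 hG n i).ne'

lemma Tmat_nonneg (n : ℕ) (i l : Fin d) : 0 ≤ Tmat G n i l :=
  div_nonneg (mul_nonneg (le_trans hc0.le (hG _ _ _).1) (Rsum_pos hc0 hG n l).le)
    (Rsum_pos hc0 hG (n+1) i).le

lemma Tmat_sum_one (n : ℕ) (i : Fin d) : ∑ l, Tmat G n i l = 1 := by
  unfold Tmat
  rw [← Finset.sum_div, ← Rsum_rec hc0 hG]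
  exact div_self (Rsum_pos hc0 hG (n+1) i).ne'

lemma rrow_rec (n : ℕ) (i j : Fin d) :
    rrow G (n+2) i j = ∑ l, Tmat G n i l * rrow G (n+1) l j := by
  unfold rrow Tmat
  have hM : Mprod G (n+2) i j = ∑ l, G (n+2) i l * Mprod G (n+1) l j := by
    rw [show (n+2) = (n+1)+1 from rfl, Mprod_succ, Matrix.mul_apply]
  rw [hM, Finset.sum_div]
  refine Finset.sum_congr rfl fun l _ => ?_
  have h1 := (Rsum_pos hc0 hG n l).ne'
  have h2 := (Rsum_pos hc0 hG (n+1) i).ne'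
  field_simp

lemma Tmat_lb (n : ℕ) (i l : Fin d) : c^4 / (d:ℝ) ≤ Tmat G n i l := by
  have hd : (0:ℝ) < d := by
    have := Nat.pos_of_ne_zero (NeZero.ne d)
    exact_mod_cast this
  have hR2 : 0 < Rsum G (n+2) i := Rsum_pos hc0 hG (n+1) i
  unfold Tmat
  rw [div_le_div_iff₀ hd hR2]
  have hSR : 0 < ∑ m, Rsum G (n+1) m :=
    Finset.sum_pos (fun m _ => Rsum_pos hc0 hG n m) univ_nonempty
  have h1 : c^4 * Rsum G (n+2) i ≤ c^3 * ∑ m, Rsum G (n+1) m := by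
    nlinarith [Rsum_up hc0 hG n i, pow_nonneg hc0.le 3]
  have h2 : c^3 * (∑ m, Rsum G (n+1) m) ≤ G (n+2) i l * Rsum G (n+1) l * d := by
    have hA := Rsum_low hc0 hG n l
    have hB : c * ((d:ℝ) * Rsum G (n+1) l) ≤ G (n+2) i l * Rsum G (n+1) l * d := by
      have hRl := (Rsum_pos hc0 hG n l).le
      nlinarith [mul_nonneg (mul_nonneg (sub_nonneg.2 (hG (n+2) i l).1) hRl) hd.le]
    nlinarith [mul_le_mul_of_nonneg_left hA hc0.le]
  linarith

lemma diam_bound (hc1 : c ≤ 1) :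
    ∀ n : ℕ, ∀ i i' : Fin d, l1 (rrow G (n+1) i) (rrow G (n+1) i') ≤ 2 * (1-c^4)^n := by
  have hc41 : c^4 ≤ 1 := pow_le_one₀ hc0.le hc1
  have hx0 : (0:ℝ) ≤ 1 - c^4 := by linarith
  intro n
  induction n with
  | zero =>
    intro i i'
    simp only [pow_zero, mul_one]
    unfold l1
    calc ∑ j, |rrow G (0+1) i j - rrow G (0+1) i' j|
        ≤ ∑ j, (rrow G (0+1) i j + rrow G (0+1) i' j) := by
          refine Finset.sum_le_sum fun j _ => ?_
          have h1 := rrow_nonneg hc0 hG 0 i j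
          have h2 := rrow_nonneg hc0 hG 0 i' j
          rw [abs_sub_le_iff]
          constructor <;> linarith
      _ = 2 := by
          rw [Finset.sum_add_distrib, rrow_sum_one hc0 hG, rrow_sum_one hc0 hG]
          norm_num
  | succ m ih =>
    intro i i'
    have he : ∀ a : Fin d, rrow G (m+2) a = fun j => ∑ l, Tmat G m a l * rrow G (m+1) l j :=
      fun a => funext fun j => rrow_rec hc0 hG m a j
    rw [show m+1+1 = m+2 from rfl, he i, he i']
    have hdne : (d:ℝ) ≠ 0 := by
      have := Nat.pos_of_ne_zero (NeZero.ne d)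
      positivity
    have hmin : c^4 ≤ ∑ l, min (Tmat G m i l) (Tmat G m i' l) := by
      calc c^4 = ∑ _l : Fin d, c^4/(d:ℝ) := by
            rw [Finset.sum_const, Finset.card_univ, Fintype.card_fin, nsmul_eq_mul]
            field_simp
        _ ≤ _ := Finset.sum_le_sum fun l _ =>
            le_min (Tmat_lb hc0 hG m i l) (Tmat_lb hc0 hG m i' l)
    have hB : (0:ℝ) ≤ 2*(1-c^4)^m := by positivity
    have hd := dobrushin (Tmat G m i) (Tmat G m i') (Tmat_nonneg hc0 hG m i)
      (Tmat_sum_one hc0 hG m i) (Tmat_nonneg hc0 hG m i') (Tmat_sum_one hc0 hG m i')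
      (rrow G (m+1)) (2*(1-c^4)^m) hB ih
    calc l1 (fun j => ∑ l, Tmat G m i l * rrow G (m+1) l j)
          (fun j => ∑ l, Tmat G m i' l * rrow G (m+1) l j)
        ≤ (1 - ∑ l, min (Tmat G m i l) (Tmat G m i' l)) * (2*(1-c^4)^m) := hd
      _ ≤ (1-c^4) * (2*(1-c^4)^m) := mul_le_mul_of_nonneg_right (by linarith) hB
      _ = 2*(1-c^4)^(m+1) := by ring

lemma consec_bound (hc1 : c ≤ 1) (n : ℕ) (i : Fin d) :
    l1 (rrow G (n+2) i) (rrow G (n+1) i) ≤ 2 * (1-c^4)^n := by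
  have he : rrow G (n+2) i = fun j => ∑ l, Tmat G n i l * rrow G (n+1) l j :=
    funext fun j => rrow_rec hc0 hG n i j
  rw [he]
  exact l1_convex_le (Tmat G n i) (Tmat_nonneg hc0 hG n i) (Tmat_sum_one hc0 hG n i)
    (rrow G (n+1)) (rrow G (n+1) i) _ (fun l => diam_bound hc0 hG hc1 n l i)

lemma chain_bound (hc1 : c ≤ 1) :
    ∀ p : ℕ, ∀ k : ℕ, 1 ≤ k → ∀ i i' : Fin d,
      l1 (rrow G k i) (rrow G (k+p) i')
        ≤ 2 * (1-c^4)^(k-1) * ∑ t ∈ Finset.range (p+1), (1-c^4)^t := by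
  intro p
  induction p with
  | zero =>
    intro k hk i i'
    obtain ⟨n, rfl⟩ : ∃ n, k = n + 1 := ⟨k - 1, by omega⟩
    simp only [Nat.add_sub_cancel, Nat.add_zero]
    rw [Finset.range_one, Finset.sum_singleton, pow_zero, mul_one]
    exact diam_bound hc0 hG hc1 n i i'
  | succ p ih =>
    intro k hk i i'
    obtain ⟨n, rfl⟩ : ∃ n, k = n + 1 := ⟨k - 1, by omega⟩
    have h1 : l1 (rrow G (n+1) i) (rrow G (n+2) i) ≤ 2 * (1-c^4)^n := by
      rw [l1_comm]
      exact consec_bound hc0 hG hc1 n i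
    have h2 : l1 (rrow G (n+2) i) (rrow G ((n+2)+p) i') 
        ≤ 2 * (1-c^4)^(n+1) * ∑ t ∈ Finset.range (p+1), (1-c^4)^t := by
      have := ih (n+2) (by omega) i i'
      simpa using this
    have htri := l1_triangle (rrow G (n+1) i) (rrow G (n+2) i) (rrow G ((n+2)+p) i')
    have harg : (n+1) + (p+1) = (n+2)+p := by omega
    rw [harg]
    simp only [Nat.add_sub_cancel]
    have hgeo : ∑ t ∈ Finset.range (p+1+1), (1-c^4)^t
        = (1-c^4) * ∑ t ∈ Finset.range (p+1), (1-c^4)^t + 1 := geom_sum_succ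
    rw [hgeo]
    calc l1 (rrow G (n+1) i) (rrow G ((n+2)+p) i')
        ≤ 2 * (1-c^4)^n + 2 * (1-c^4)^(n+1) * ∑ t ∈ Finset.range (p+1), (1-c^4)^t := by
          linarith
      _ = 2 * (1-c^4)^n * ((1-c^4) * (∑ t ∈ Finset.range (p+1), (1-c^4)^t) + 1) := by ring

lemma full_bound (hc1 : c ≤ 1) (k : ℕ) (hk : 1 ≤ k) (p : ℕ) (i i' : Fin d) :
    l1 (rrow G k i) (rrow G (k+p) i') ≤ 2 * (1-c^4)^(k-1) / c^4 := by
  have hc41 : c^4 ≤ 1 := pow_le_one₀ hc0.le hc1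
  have hc4p : (0:ℝ) < c^4 := by positivity
  have hx0 : (0:ℝ) ≤ 1 - c^4 := by linarith
  have hx1 : 1 - c^4 < 1 := by linarith
  have hgs : ∑ t ∈ Finset.range (p+1), (1-c^4)^t ≤ 1 / (1 - (1-c^4)) :=
    geom_sum_le_div hx0 hx1 (p+1)
  have hgs' : ∑ t ∈ Finset.range (p+1), (1-c^4)^t ≤ 1 / c^4 := by
    rw [show 1 - (1-c^4) = c^4 by ring] at hgs
    exact hgs
  calc l1 (rrow G k i) (rrow G (k+p) i')
      ≤ 2 * (1-c^4)^(k-1) * ∑ t ∈ Finset.range (p+1), (1-c^4)^t :=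
        chain_bound hc0 hG hc1 p k hk i i'
    _ ≤ 2 * (1-c^4)^(k-1) * (1 / c^4) := by
        refine mul_le_mul_of_nonneg_left hgs' ?_
        positivity
    _ = 2 * (1-c^4)^(k-1) / c^4 := by ring

lemma exists_limit (hc1 : c ≤ 1) :
    ∃ v : Fin d → ℝ, (∀ j, 0 ≤ v j) ∧ (∑ j, v j = 1) ∧
      ∀ k : ℕ, 1 ≤ k → ∀ i : Fin d,
        l1 (rrow G k i) v ≤ 2 * (1-c^4)^(k-1) / c^4 := by
  have hc41 : c^4 ≤ 1 := pow_le_one₀ hc0.le hc1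
  have hx0 : (0:ℝ) ≤ 1 - c^4 := by linarith
  have hx1 : 1 - c^4 < 1 := by
    have : (0:ℝ) < c^4 := by positivity
    linarith
  set i0 : Fin d := ⟨0, Nat.pos_of_ne_zero (NeZero.ne d)⟩ with hi0
  set f : ℕ → (Fin d → ℝ) := fun m => rrow G (m+1) i0 with hf
  have hdist : ∀ n, dist (f n) (f (n+1)) ≤ 2 * (1-c^4)^n := by
    intro n
    rw [dist_pi_le_iff (by positivity)]
    intro j
    have hcoord : dist (f n j) (f (n+1) j) = |f n j - f (n+1) j| := Real.dist_eq _ _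
    rw [hcoord]
    have h1 : |f n j - f (n+1) j| ≤ l1 (f n) (f (n+1)) := by
      unfold l1
      exact Finset.single_le_sum (f := fun j => |f n j - f (n+1) j|)
        (fun j _ => abs_nonneg _) (Finset.mem_univ j)
    have h2 : l1 (f n) (f (n+1)) ≤ 2 * (1-c^4)^n := by
      simp only [hf]
      rw [l1_comm]
      exact consec_bound hc0 hG hc1 n i0
    linarith
  have hcauchy : CauchySeq f := cauchySeq_of_le_geometric (1-c^4) 2 hx1 hdist
  obtain ⟨v, hv⟩ := cauchySeq_tendsto_of_complete hcauchy
  have hvj : ∀ j, Tendsto (fun m => f m j) atTop (nhds (v j)) :=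
    fun j => ((continuous_apply j).tendsto v).comp hv
  refine ⟨v, ?_, ?_, ?_⟩
  · intro j
    exact ge_of_tendsto' (hvj j) (fun m => rrow_nonneg hc0 hG m i0 j)
  · have hsum : Tendsto (fun m => ∑ j, f m j) atTop (nhds (∑ j, v j)) :=
      tendsto_finset_sum _ fun j _ => hvj j
    have hone : (fun m => ∑ j, f m j) = fun _ => (1:ℝ) :=
      funext fun m => rrow_sum_one hc0 hG m i0
    rw [hone] at hsum
    exact (tendsto_nhds_unique hsum tendsto_const_nhds)
  · intro k hk i
    have hg : Tendsto (fun p => rrow G (k+p) i0) atTop (nhds v) := by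
      have hshift : Tendsto (fun p : ℕ => p + (k-1)) atTop atTop :=
        tendsto_add_atTop_nat (k-1)
      have h := hv.comp hshift
      have heq : (f ∘ fun p => p + (k-1)) = fun p => rrow G (k+p) i0 := by
        funext p
        simp only [Function.comp_apply, hf]
        rw [show p + (k-1) + 1 = k + p by omega]
      rwa [heq] at h
    have hl1 : Tendsto (fun p => l1 (rrow G k i) (rrow G (k+p) i0)) atTop
        (nhds (l1 (rrow G k i) v)) := by
      unfold l1
      apply tendsto_finset_sum
      intro j _
      exact ((tendsto_const_nhds.sub (((continuous_apply j).tendsto v).comp hg)).abs)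
    exact le_of_tendsto hl1
      (Filter.Eventually.of_forall fun p => full_bound hc0 hG hc1 k hk p i i0)

end

end Stmt3Aux

open Stmt3Aux in
/-- If all entries of the matrices `G_k` lie in `[c, 1/c]` for some `c ∈ (0,1]`, then
there is a probability vector `v` such that, uniformly over nonzero nonnegative row
vectors `π`, the normalized left products `π G_k ⋯ G_1 / (π G_k ⋯ G_1 𝟏)` are within
ℓ¹-distance `2(1-c⁴)^{k-1}/c⁴` of `v`. -/
theorem stmt3 (d : ℕ) [NeZero d] (c : ℝ) (hc0 : 0 < c) (hc1 : c ≤ 1)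
    (G : ℕ → Matrix (Fin d) (Fin d) ℝ)
    (hG : ∀ k i j, G k i j ∈ Set.Icc c (1/c)) :
    ∃ v : Fin d → ℝ, (∀ i, 0 ≤ v i) ∧ (∑ i, v i = 1) ∧
      ∀ (π : Fin d → ℝ), (∀ i, 0 ≤ π i) → π ≠ 0 → ∀ k : ℕ, 1 ≤ k →
        ∑ j, |Matrix.vecMul π (((List.range k).map (fun m => G (k - m))).prod) j /
              (∑ j', Matrix.vecMul π (((List.range k).map (fun m => G (k - m))).prod) j')
            - v j|
          ≤ 2 * (1 - c^4)^(k-1) / c^4 := by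
  obtain ⟨v, hv0, hv1, hvlim⟩ := exists_limit hc0 hG hc1
  refine ⟨v, hv0, hv1, ?_⟩
  intro π hπ hπne k hk
  obtain ⟨n, rfl⟩ : ∃ n, k = n + 1 := ⟨k-1, by omega⟩
  have hMe : (((List.range (n+1)).map (fun m => G (n+1 - m))).prod) = Mprod G (n+1) := rfl
  simp only [hMe]
  have hvec : ∀ j, Matrix.vecMul π (Mprod G (n+1)) j
      = ∑ i, π i * Mprod G (n+1) i j := by
    intro j
    simp [Matrix.vecMul, dotProduct]
  set N : ℝ := ∑ i, π i * Rsum G (n+1) i with hNdef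
  have hNpos : 0 < N := by
    have hex : ∃ i, π i ≠ 0 := by
      by_contra h
      push_neg at h
      exact hπne (funext h)
    obtain ⟨i1, hi1⟩ := hex
    refine Finset.sum_pos' (fun i _ => mul_nonneg (hπ i) (Rsum_pos hc0 hG n i).le)
      ⟨i1, Finset.mem_univ i1, mul_pos ((hπ i1).lt_of_ne (Ne.symm hi1))
        (Rsum_pos hc0 hG n i1)⟩
  have hden : (∑ j', Matrix.vecMul π (Mprod G (n+1)) j') = N := by
    simp only [hvec]
    rw [Finset.sum_comm, hNdef]
    refine Finset.sum_congr rfl fun i _ => ?_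
    rw [← Finset.mul_sum]
    rfl
  set w : Fin d → ℝ := fun i => π i * Rsum G (n+1) i / N with hwdef
  have hw0 : ∀ i, 0 ≤ w i := fun i =>
    div_nonneg (mul_nonneg (hπ i) (Rsum_pos hc0 hG n i).le) hNpos.le
  have hw1 : ∑ i, w i = 1 := by
    simp only [hwdef]
    rw [← Finset.sum_div, ← hNdef]
    exact div_self hNpos.ne'
  have hkey : ∀ j, Matrix.vecMul π (Mprod G (n+1)) j / N = ∑ i, w i * rrow G (n+1) i j := by
    intro j
    rw [hvec j, Finset.sum_div]
    refine Finset.sum_congr rfl fun i _ => ?_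
    simp only [hwdef]
    unfold rrow
    have hR := (Rsum_pos hc0 hG n i).ne'
    field_simp
  rw [hden]
  have hgoal : ∑ j, |Matrix.vecMul π (Mprod G (n+1)) j / N - v j|
      = l1 (fun j => ∑ i, w i * rrow G (n+1) i j) v := by
    unfold l1
    exact Finset.sum_congr rfl fun j _ => by rw [hkey j]
  rw [hgoal]
  exact l1_convex_le w hw0 hw1 (rrow G (n+1)) v _ (fun i => hvlim (n+1) (by omega) i)
end

section
/- Let (K_M)_{M ≥ 1} be a nested decreasing sequence of subsets of ℝ, nonempty for each M, with K_M compact for all large M. Then ∩_M K_M is nonempty. Consequently, if (Λ_M) is a nondecreasing (in M) sequence of functions converging pointwise to Λ, with Legendre transforms J_M(t) = sup_λ(λt − Λ_M(λ)), if J_∞(t) := lim_M J_M(t) is finite and for each large M the set K_M = {λ : λt − Λ_M(λ) ≥ J_∞(t)} is compact and nonempty, then J_∞(t) ≤ J(t) = sup_λ(λt − Λ(λ)); combined with the trivial inequality J_M(t) ≥ J(t), this yields lim_{M→∞} J_M(t) = J(t). -/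
open Filter Set

lemma aux_iInter (K : ℕ → Set ℝ) (hdec : ∀ M, K (M+1) ⊆ K M) (hne : ∀ M, (K M).Nonempty)
    (M₀ : ℕ) (hcomp : ∀ M, M₀ ≤ M → IsCompact (K M)) : (⋂ M, K M).Nonempty := by
  have hant : Antitone K := antitone_nat_of_succ_le hdec
  have h := IsCompact.nonempty_iInter_of_sequence_nonempty_isCompact_isClosed
    (fun n => K (M₀ + n)) (fun n => hant (by omega)) (fun n => hne _)
    (hcomp _ (by omega)) (fun n => (hcomp _ (by omega)).isClosed)
  obtain ⟨x, hx⟩ := h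
  simp only [mem_iInter] at hx
  exact ⟨x, mem_iInter.mpr fun M => hant (show M ≤ M₀ + M by omega) (hx M)⟩

/-- Nested nonempty sets of reals, compact for all large indices, have nonempty
intersection; consequently, if truncated log mgf's `Λ_M ↑ Λ` have Legendre transforms
`J_M(t)` converging to a finite `J_∞(t)`, and the superlevel sets
`K_M = {λ : λt − Λ_M(λ) ≥ J_∞(t)}` are compact and nonempty for large `M`, then
`J_∞(t) = J(t)` and `J_M(t) → J(t)`, where `J(t) = sup_λ(λt − Λ(λ))`. -/
theorem stmt14 (K : ℕ → Set ℝ)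
    (hdec : ∀ M, K (M+1) ⊆ K M) (hne : ∀ M, (K M).Nonempty)
    (hcomp : ∃ M₀, ∀ M, M₀ ≤ M → IsCompact (K M))
    (ΛM : ℕ → ℝ → ℝ) (Λ : ℝ → EReal) (t Jinf : ℝ)
    (hmono : ∀ l : ℝ, Monotone (fun M => ΛM M l))
    (hlim : ∀ l : ℝ, Tendsto (fun M => ((ΛM M l : ℝ) : EReal)) atTop (nhds (Λ l)))
    (hJinf : Tendsto (fun M => ⨆ l : ℝ, ((l * t - ΛM M l : ℝ) : EReal))
      atTop (nhds ((Jinf : ℝ) : EReal)))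
    (hKM : ∃ M₀, ∀ M, M₀ ≤ M →
      IsCompact {l : ℝ | Jinf ≤ l * t - ΛM M l} ∧
      {l : ℝ | Jinf ≤ l * t - ΛM M l}.Nonempty) :
    (⋂ M, K M).Nonempty ∧
    (⨆ l : ℝ, (((l * t : ℝ) : EReal) - Λ l)) = ((Jinf : ℝ) : EReal) ∧
    Tendsto (fun M => ⨆ l : ℝ, ((l * t - ΛM M l : ℝ) : EReal)) atTop
      (nhds (⨆ l : ℝ, (((l * t : ℝ) : EReal) - Λ l))) := by
  obtain ⟨M₀, hcomp⟩ := hcomp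
  have part1 : (⋂ M, K M).Nonempty := aux_iInter K hdec hne M₀ hcomp
  -- ΛM M l ≤ Λ l
  have hle : ∀ l M, ((ΛM M l : ℝ) : EReal) ≤ Λ l := by
    intro l M
    refine Monotone.ge_of_tendsto (f := fun M => ((ΛM M l : ℝ) : EReal)) ?_ (hlim l) M
    intro a b hab
    exact EReal.coe_le_coe_iff.mpr (hmono l hab)
  -- upper bound: sup ≤ Jinf
  have hub : (⨆ l : ℝ, (((l * t : ℝ) : EReal) - Λ l)) ≤ ((Jinf : ℝ) : EReal) := by
    refine iSup_le fun l => ?_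
    refine ge_of_tendsto' hJinf fun M => ?_
    calc ((l * t : ℝ) : EReal) - Λ l ≤ ((l * t : ℝ) : EReal) - ((ΛM M l : ℝ) : EReal) :=
          EReal.sub_le_sub le_rfl (hle l M)
      _ = ((l * t - ΛM M l : ℝ) : EReal) := (EReal.coe_sub _ _).symm
      _ ≤ ⨆ l : ℝ, ((l * t - ΛM M l : ℝ) : EReal) := le_iSup (fun l : ℝ => ((l * t - ΛM M l : ℝ) : EReal)) l
  -- lower bound via compact superlevel sets
  obtain ⟨M₁, hKM⟩ := hKM
  set L : ℕ → Set ℝ := fun M => {l : ℝ | Jinf ≤ l * t - ΛM (M₁ + M) l} with hL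
  have hLdec : ∀ M, L (M+1) ⊆ L M := by
    intro M l hl
    simp only [hL, mem_setOf_eq] at hl ⊢
    have := hmono l (show M₁ + M ≤ M₁ + (M+1) by omega)
    linarith
  have hLne : ∀ M, (L M).Nonempty := fun M => (hKM _ (by omega)).2
  have hLcomp : ∀ M, 0 ≤ M → IsCompact (L M) := fun M _ => (hKM _ (by omega)).1
  obtain ⟨l₀, hl₀⟩ := aux_iInter L hLdec hLne 0 hLcomp
  simp only [mem_iInter, hL, mem_setOf_eq] at hl₀
  -- Λ l₀ ≤ l₀ t - Jinf
  have hΛ : Λ l₀ ≤ ((l₀ * t - Jinf : ℝ) : EReal) := by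
    refine le_of_tendsto (hlim l₀) ?_
    filter_upwards [eventually_ge_atTop M₁] with M hM
    have : ΛM M l₀ ≤ ΛM (M₁ + (M - M₁)) l₀ := hmono l₀ (by omega)
    have h2 := hl₀ (M - M₁)
    exact EReal.coe_le_coe_iff.mpr (by linarith)
  have hlb : ((Jinf : ℝ) : EReal) ≤ (((l₀ * t : ℝ) : EReal) - Λ l₀) := by
    revert hΛ
    induction Λ l₀ using EReal.rec with
    | bot => intro _; rw [EReal.coe_sub_bot]; exact le_top
    | coe x =>
      intro h
      rw [← EReal.coe_sub, EReal.coe_le_coe_iff]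
      have := EReal.coe_le_coe_iff.mp h
      linarith
    | top => intro h; exact absurd (top_le_iff.mp h) (EReal.coe_ne_top _)
  have heq : (⨆ l : ℝ, (((l * t : ℝ) : EReal) - Λ l)) = ((Jinf : ℝ) : EReal) :=
    le_antisymm hub (le_trans hlb (le_iSup (fun l : ℝ => (((l * t : ℝ) : EReal) - Λ l)) l₀))
  exact ⟨part1, heq, by rw [heq]; exact hJinf⟩
end

section
/- Let f : [−∞, −1] × K → (−∞, ∞] where K is a compact convex metrizable space, with f(λ, α) concave (indeed of the form λ − L_α(λ) + h(α)) in λ for each α, convex and lower semicontinuous in α for each λ ∈ [−∞,−1], where f(−∞, α) := lim_{λ→−∞} f(λ, α) exists by monotone approximation (sup over λ of λ − L_α(λ) is attained in the limit λ → −∞ whenever λ + log κ ≤ L_α(λ) ≤ λ for λ ≤ 0). Then sup_{λ ∈ [−∞,−1]} inf_{α ∈ K} f(λ,α) = inf_{α ∈ K} sup_{λ ∈ [−∞,−1]} f(λ,α). -/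
open Filter

private lemma slope_key {κ : ℝ} (hκ0 : 0 < κ) (hκ1 : κ < 1)
    {L : ℝ → ℝ} (hconv : ConvexOn ℝ (Set.Iic (0:ℝ)) L)
    (hsand : ∀ l : ℝ, l ≤ 0 → l + Real.log κ ≤ L l ∧ L l ≤ l)
    {x y : ℝ} (hxy : x ≤ y) (hy : y ≤ 0) : y - x ≤ L y - L x := by
  rcases eq_or_lt_of_le hxy with rfl | hxy
  · simp
  have hC : 0 < -Real.log κ := by
    have := Real.log_neg hκ0 hκ1; linarith
  set C := -Real.log κ with hCdef
  refine le_of_forall_pos_le_add ?_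
  intro ε hε
  set z := x - (y - x) * C / ε - 1 with hz
  have h1 : 0 ≤ (y - x) * C / ε := div_nonneg (mul_nonneg (by linarith) hC.le) hε.le
  have hzx : z < x := by simp only [hz]; linarith
  have hdz : 0 < x - z := by linarith
  have hdy : 0 < y - x := by linarith
  have hslope := hconv.slope_mono_adjacent (Set.mem_Iic.2 (by linarith : z ≤ (0:ℝ)))
    (Set.mem_Iic.2 hy) hzx hxy
  rw [div_le_div_iff₀ hdz hdy] at hslope
  have hLz : L z ≤ z := (hsand z (by linarith)).2
  have hLx : x + Real.log κ ≤ L x := (hsand x (by linarith : x ≤ 0)).1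
  have hεz : ε * (x - z) = (y - x) * C + ε := by
    have h2 : ε * ((y - x) * C / ε) = (y - x) * C := by field_simp
    rw [hz]; linear_combination h2
  nlinarith [mul_pos hdy hdz, mul_le_mul_of_nonneg_right (hLz.trans (by linarith : z ≤ L x - (x - z) + C)) hdy.le]

/-- Sion-type minimax on the compactified interval `[−∞,−1]` and a compact convex set
`K`: for `f(λ,α) = λ − L_α(λ) + h(α)` which is concave in `λ`, convex and lower
semicontinuous in `α`, with `λ + log κ ≤ L_α(λ) ≤ λ` for `λ ≤ 0` (so that
`f(−∞,α) = lim_{λ→−∞} f(λ,α)` exists), the supremum over `λ ∈ [−∞,−1]` of the infimum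
over `α ∈ K` equals the infimum over `α ∈ K` of the supremum over `λ ∈ [−∞,−1]`. -/
theorem stmt19 {E : Type*} [AddCommGroup E] [Module ℝ E] [TopologicalSpace E]
    (S : Set E) (hS : IsCompact S) (hSconv : Convex ℝ S) (hSne : S.Nonempty)
    (κ : ℝ) (hκ0 : 0 < κ) (hκ1 : κ < 1)
    (L : E → ℝ → ℝ) (h : E → EReal) (hh : ∀ a ∈ S, 0 ≤ h a)
    (f : ℝ → E → EReal)
    (hf : ∀ (l : ℝ) (a : E), f l a = ((l - L a l : ℝ) : EReal) + h a)
    (finf : E → EReal)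
    (hfinf : ∀ a ∈ S, Tendsto (fun l : ℝ => f l a) atBot (nhds (finf a)))
    (hsand : ∀ a ∈ S, ∀ l : ℝ, l ≤ 0 → l + Real.log κ ≤ L a l ∧ L a l ≤ l)
    (hLconv : ∀ a ∈ S, ConvexOn ℝ (Set.Iic (0:ℝ)) (L a))
    (hlsc : ∀ l : ℝ, l ≤ -1 → LowerSemicontinuousOn (fun a => f l a) S)
    (hconva : ∀ l : ℝ, l ≤ -1 → ∀ a ∈ S, ∀ b ∈ S, ∀ t : ℝ, 0 ≤ t → t ≤ 1 →
      f l (t • a + (1 - t) • b) ≤ (t : EReal) * f l a + ((1 - t : ℝ) : EReal) * f l b)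
    (hlscinf : LowerSemicontinuousOn finf S)
    (hconvinf : ∀ a ∈ S, ∀ b ∈ S, ∀ t : ℝ, 0 ≤ t → t ≤ 1 →
      finf (t • a + (1 - t) • b)
        ≤ (t : EReal) * finf a + ((1 - t : ℝ) : EReal) * finf b) :
    ((⨅ a ∈ S, finf a) ⊔ ⨆ (l : ℝ) (_ : l ≤ -1), ⨅ a ∈ S, f l a)
      = ⨅ a ∈ S, (finf a ⊔ ⨆ (l : ℝ) (_ : l ≤ -1), f l a) := by
  have key : ∀ a ∈ S, ∀ l : ℝ, l ≤ -1 → f l a ≤ finf a := by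
    intro a ha l hl
    have hmono : ∀ l' : ℝ, l' ≤ l → f l a ≤ f l' a := by
      intro l' hl'
      rw [hf, hf]
      refine add_le_add_left ?_ (h a)
      have := slope_key hκ0 hκ1 (hLconv a ha) (fun m hm => hsand a ha m hm) hl'
        (by linarith : l ≤ 0)
      exact_mod_cast (by linarith : (l - L a l : ℝ) ≤ l' - L a l')
    exact ge_of_tendsto (hfinf a ha) (eventually_atBot.2 ⟨l, hmono⟩)
  have hR : ∀ a ∈ S, (finf a ⊔ ⨆ (l : ℝ) (_ : l ≤ -1), f l a) = finf a := by
    intro a ha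
    exact sup_eq_left.2 (iSup₂_le fun l hl => key a ha l hl)
  have hL : (⨆ (l : ℝ) (_ : l ≤ -1), ⨅ a ∈ S, f l a) ≤ ⨅ a ∈ S, finf a :=
    iSup₂_le fun l hl => le_iInf₂ fun a ha => (iInf₂_le a ha).trans (key a ha l hl)
  rw [sup_eq_left.2 hL]
  exact iInf_congr fun a => iInf_congr fun ha => (hR a ha).symm
end
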